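/- The Lotka-Volterra map φ(v₀,...,v₄) = (v₁,...,v₄, v₃(v₀+1)/v₂ - 1) is a Poisson map (dφ·Ω(v)·dφᵀ = Ω(φ(v))) for the structure matrix Ω with nonzero entries Ω₁₃ = (v₀+1)(v₂+1), Ω₁₄ = -(v₀+1)(v₃+1), Ω₁₅ = (v₀+1)(1/v₂+1)(v₄+1), Ω₂₄ = (v₁+1)(v₃+1), Ω₂₅ = -(v₁+1)(v₄+1), Ω₃₅ = (v₂+1)(v₄+1). -/

import Mathlib

open Matrix

/-- The structure matrix of the Lotka-Volterra (3,-2) reduction. -/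
noncomputable def lvOmega (v : Fin 5 → ℝ) : Matrix (Fin 5) (Fin 5) ℝ :=
  !![0, 0, (v 0 + 1)*(v 2 + 1), -((v 0 + 1)*(v 3 + 1)), (v 0 + 1)*(1/(v 2) + 1)*(v 4 + 1);
     0, 0, 0, (v 1 + 1)*(v 3 + 1), -((v 1 + 1)*(v 4 + 1));
     -((v 0 + 1)*(v 2 + 1)), 0, 0, 0, (v 2 + 1)*(v 4 + 1);
     (v 0 + 1)*(v 3 + 1), -((v 1 + 1)*(v 3 + 1)), 0, 0, 0;
     -((v 0 + 1)*(1/(v 2) + 1)*(v 4 + 1)), (v 1 + 1)*(v 4 + 1), -((v 2 + 1)*(v 4 + 1)), 0, 0]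

/-- The (3,-2) Lotka-Volterra reduction map. -/
noncomputable def lvMap (v : Fin 5 → ℝ) : Fin 5 → ℝ :=
  ![v 1, v 2, v 3, v 4, v 3 * (v 0 + 1) / v 2 - 1]

/-- The Jacobian matrix of the Lotka-Volterra map. -/
noncomputable def lvJac (v : Fin 5 → ℝ) : Matrix (Fin 5) (Fin 5) ℝ :=
  fun i j => deriv (fun t => lvMap (Function.update v j t) i) (v j)

/-! The Jacobian of `lvMap` is the shift matrix with its last row replaced by the gradient of
the last component `v₃ (v₀ + 1) / v₂ - 1`. Each entry of `J Ω(v) Jᵀ = Ω(φ v)` is then a rational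
identity in `v`, which holds once the denominators `v₂` and `v₃ = (φ v)₂` are cleared. -/

theorem lvJac_eq (v : Fin 5 → ℝ) :
    lvJac v = !![0, 1, 0, 0, 0; 0, 0, 1, 0, 0; 0, 0, 0, 1, 0; 0, 0, 0, 0, 1;
      v 3 / v 2, 0, -(v 3 * (v 0 + 1)) / v 2 ^ 2, (v 0 + 1) / v 2, 0] := by
  ext i j
  fin_cases i <;> fin_cases j <;> simp [lvJac, lvMap, Function.update]

/-- The Lotka-Volterra map is a Poisson map for the structure matrix `lvOmega`. -/
theorem lvMap_poisson (v : Fin 5 → ℝ) (h2 : v 2 ≠ 0) (h3 : v 3 ≠ 0) :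
    lvJac v * lvOmega v * (lvJac v)ᵀ = lvOmega (lvMap v) := by
  rw [lvJac_eq]
  ext i j
  fin_cases i <;> fin_cases j <;>
    simp only [Fin.zero_eta, Fin.mk_one, Fin.reduceFinMk, lvOmega, lvMap, mul_apply, transpose_apply,
      Fin.sum_univ_five, of_apply, cons_val, Fin.isValue, mul_zero, zero_mul, one_mul, mul_one,
      zero_add, add_zero] <;>
    field_simp <;> ring
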